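/- arXiv:1502.07326 — 2 statements merged into one kernel-verified Lean document; each statement's English description precedes it below -/
import Mathlib

section
/- Failure of Pavelka completeness over the standard Gödel algebra: let ⊗ = min on [0,1] with its residuum (a → b = 1 if a ≤ b, b otherwise), let p, q be distinct propositional variables, and let Σ = {{0/p} ⇒ {a/p} : a rational, 0 ≤ a < 0.5} ∪ {{0.5/p} ⇒ {1/q}}. Then ||{0/p} ⇒ {1/q}||_Σ = 1 while |{0/p} ⇒ {1/q}|_Σ ≤ 0.5 < 1. -/
/- Common framework for Rational Fuzzy Attribute Logic (RFAL):
   truth degrees in the real unit interval, fuzzy sets, subsethood,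
   the deductive system (axioms, Cut, Mul), provability and semantic
   entailment degrees, and the least-model iteration. -/

open scoped Classical
noncomputable section

instance : Fact ((0:ℝ) ≤ 1) := ⟨zero_le_one⟩

/-- The real unit interval, used as the set of truth degrees. -/
abbrev UI := unitInterval

/-- Standard Łukasiewicz conjunction: a ⊗_Ł b = max(0, a+b-1). -/
def lukMul (a b : UI) : UI :=
  ⟨max 0 (a.1 + b.1 - 1), Set.mem_Icc.mpr ⟨le_max_left _ _,
    max_le zero_le_one (by have ha := a.2.2; have hb := b.2.2; linarith)⟩⟩

/-- Standard Łukasiewicz residuum: a →_Ł b = min(1, 1-a+b). -/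
def lukImp (a b : UI) : UI :=
  ⟨min 1 (1 - a.1 + b.1), Set.mem_Icc.mpr
    ⟨le_min zero_le_one (by have ha := a.2.2; have hb := b.2.1; linarith), min_le_left _ _⟩⟩

/-- Standard product (Goguen) conjunction: a ⊗_Π b = a·b. -/
def prodMul (a b : UI) : UI := a * b

/-- Standard product (Goguen) residuum: a →_Π b = 1 if a ≤ b, else b/a. -/
def prodImp (a b : UI) : UI :=
  if h : a ≤ b then 1 else
    ⟨b.1 / a.1, Set.mem_Icc.mpr ⟨div_nonneg b.2.1 a.2.1,
      div_le_one_of_le₀ (le_of_lt (Subtype.coe_lt_coe.mpr (not_le.mp h))) a.2.1⟩⟩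

/-- Gödel conjunction: minimum. -/
def godMul (a b : UI) : UI := a ⊓ b

/-- Gödel residuum: a → b = 1 if a ≤ b, else b. -/
def godImp (a b : UI) : UI := if a ≤ b then 1 else b

/-- A structure of truth degrees on [0,1]: a commutative monoid ⟨[0,1],⊗,1⟩
    with ⊗ and → adjoint, and ⊗ distributing over arbitrary suprema
    (the lattice structure is the natural complete linear order of [0,1]). -/
structure RStr where
  mul : UI → UI → UI
  imp : UI → UI → UI
  mul_comm : ∀ a b, mul a b = mul b a
  mul_assoc : ∀ a b c, mul (mul a b) c = mul a (mul b c)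
  mul_one : ∀ a, mul a 1 = a
  adjoint : ∀ a b c, mul a b ≤ c ↔ a ≤ imp b c
  mul_iSup : ∀ (ι : Type) (a : UI) (b : ι → UI), mul a (⨆ i, b i) = ⨆ i, mul a (b i)

/-- A degree in [0,1] is rational. -/
def IsRatUI (x : UI) : Prop := ∃ q : ℚ, (x : ℝ) = q

/-- L is rationally closed: ⊗ and → of rational degrees are rational. -/
def RStr.RationallyClosed (L : RStr) : Prop :=
  ∀ a b, IsRatUI a → IsRatUI b → IsRatUI (L.mul a b) ∧ IsRatUI (L.imp a b)

/-- Condition ⨆_i (a → b_i) = a → ⨆_i b_i for all a and all families {b_i}. -/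
def RStr.ImpSupDistrib (L : RStr) : Prop :=
  ∀ (ι : Type) (a : UI) (b : ι → UI), (⨆ i, L.imp a (b i)) = L.imp a (⨆ i, b i)

variable {V : Type}

/-- A fuzzy set is finite: only finitely many elements get nonzero degree. -/
def FinSet (A : V → UI) : Prop := {p | A p ≠ 0}.Finite

/-- A fuzzy set is rational: all its values are rational. -/
def RatSet (A : V → UI) : Prop := ∀ p, IsRatUI (A p)

/-- Union of fuzzy sets: pointwise supremum. -/
def funion (A B : V → UI) : V → UI := fun p => A p ⊔ B p

/-- c-multiple of a fuzzy set: pointwise ⊗ by c. -/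
def csmul (L : RStr) (c : UI) (A : V → UI) : V → UI := fun p => L.mul c (A p)

/-- Subsethood degree S(A,B) = ⨅_p (A(p) → B(p)). -/
def Subdeg (L : RStr) (A B : V → UI) : UI := ⨅ p, L.imp (A p) (B p)

/-- The deductive system of RFAL: axioms A∪B ⇒ B (A, B finite rational),
    rule (Cut): from A⇒B and B∪C⇒D infer A∪C⇒D, and
    rule (Mul): from A⇒B infer c⊗A ⇒ c⊗B for rational c. -/
inductive Proves (L : RStr) (T : Set ((V → UI) × (V → UI))) : (V → UI) → (V → UI) → Prop
  | ax : ∀ A B, FinSet A → RatSet A → FinSet B → RatSet B →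
      Proves L T (funion A B) B
  | hyp : ∀ A B, (A, B) ∈ T → Proves L T A B
  | cut : ∀ A B C D, Proves L T A B → Proves L T (funion B C) D →
      Proves L T (funion A C) D
  | mul : ∀ A B c, IsRatUI c → Proves L T A B →
      Proves L T (csmul L c A) (csmul L c B)

/-- Provability degree |A⇒B|_Σ = ⨆{c rational : Σ ⊢ A ⇒ c⊗B}. -/
def provDeg (L : RStr) (T : Set ((V → UI) × (V → UI))) (A B : V → UI) : UI :=
  sSup {c : UI | IsRatUI c ∧ Proves L T A (csmul L c B)}

/-- Truth degree ||A⇒B||_e = S(A,e) → S(B,e). -/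
def truthDeg (L : RStr) (e A B : V → UI) : UI :=
  L.imp (Subdeg L A e) (Subdeg L B e)

/-- e is a model of Σ: every formula of Σ is fully true under e. -/
def IsModel (L : RStr) (T : Set ((V → UI) × (V → UI))) (e : V → UI) : Prop :=
  ∀ AB ∈ T, truthDeg L e AB.1 AB.2 = 1

/-- Semantic entailment degree ||A⇒B||_Σ = ⨅{||A⇒B||_e : e model of Σ}. -/
def semDeg (L : RStr) (T : Set ((V → UI) × (V → UI))) (A B : V → UI) : UI :=
  ⨅ e ∈ {e : V → UI | IsModel L T e}, truthDeg L e A B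

/-- A theory: a set of rational fuzzy attribute implications, i.e.
    pairs of finite rational fuzzy sets. -/
def IsTheory (T : Set ((V → UI) × (V → UI))) : Prop :=
  ∀ AB ∈ T, FinSet AB.1 ∧ RatSet AB.1 ∧ FinSet AB.2 ∧ RatSet AB.2

/-- The iteration e⁰_Σ = e, e^{n+1}_Σ = e^n_Σ ∪ ⋃{S(A,e^n_Σ) ⊗ B : A⇒B ∈ Σ}. -/
def iter (L : RStr) (T : Set ((V → UI) × (V → UI))) (e : V → UI) : ℕ → (V → UI)
  | 0 => e
  | n + 1 => fun p => iter L T e n p ⊔ ⨆ AB ∈ T, L.mul (Subdeg L AB.1 (iter L T e n)) (AB.2 p)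

/-- e^ω_Σ = ⋃_{n<ω} e^n_Σ. -/
def omegaIter (L : RStr) (T : Set ((V → UI) × (V → UI))) (e : V → UI) : V → UI :=
  fun p => ⨆ n, iter L T e n p

/-- An L-closure operator: extensive, monotone w.r.t. subsethood degrees,
    and idempotent. -/
def IsClosureOp {U : Type} (L : RStr) (C : (U → UI) → (U → UI)) : Prop :=
  (∀ A u, A u ≤ C A u) ∧ (∀ A B, Subdeg L A B ≤ Subdeg L (C A) (C B)) ∧
  (∀ A, C (C A) = C A)

/-- A finitary operator: C(A) = ⋃{C(B) : B ⊆ A, B finite}. -/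
def FinitaryOp {U : Type} (C : (U → UI) → (U → UI)) : Prop :=
  ∀ A : U → UI, C A = fun u => ⨆ B ∈ {B : U → UI | (∀ v, B v ≤ A v) ∧ FinSet B}, C B u

/-- A rational operator: C(A) = ⋃{C(B) : B ⊑ A}, B finite and rational. -/
def RationalOp {U : Type} (C : (U → UI) → (U → UI)) : Prop :=
  ∀ A : U → UI, C A =
    fun u => ⨆ B ∈ {B : U → UI | (∀ v, B v ≤ A v) ∧ FinSet B ∧ RatSet B}, C B u

/-- Singleton fuzzy set {a/p}. -/
def sing (p : V) (a : UI) : V → UI := fun v => if v = p then a else 0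

/-- The degree 0.5 as an element of the unit interval. -/
def half : UI := ⟨1/2, Set.mem_Icc.mpr ⟨by norm_num, by norm_num⟩⟩

/- ===== auxiliary lemmas ===== -/

lemma godImp_one_of_le {a b : UI} (h : a ≤ b) : godImp a b = 1 := if_pos h

lemma godImp_le_of_one {a b : UI} (h : godImp a b = 1) : a ≤ b := by
  by_contra hc
  rw [godImp, if_neg hc] at h
  exact hc (h ▸ unitInterval.le_one')

lemma le_godImp (a b : UI) : b ≤ godImp a b := by
  rw [godImp]; split
  · exact unitInterval.le_one'
  · exact le_rfl

lemma godImp_zero_left (b : UI) : godImp 0 b = 1 :=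
  godImp_one_of_le unitInterval.nonneg'

lemma godImp_anti {a a' b : UI} (h : a' ≤ a) : godImp a b ≤ godImp a' b := by
  rw [godImp, godImp]
  split
  · split
    · exact le_rfl
    · next h1 h2 => exact absurd (le_trans h h1) h2
  · exact le_godImp a' b

lemma godImp_mono {a b b' : UI} (h : b ≤ b') : godImp a b ≤ godImp a b' := by
  rw [godImp, godImp]
  split
  · rw [if_pos (by next h1 => exact le_trans h1 h)]
  · split
    · exact unitInterval.le_one'
    · exact h

lemma godImp_sup (a b y : UI) : godImp (a ⊔ b) y = godImp a y ⊓ godImp b y := by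
  rcases le_total a b with h | h
  · rw [sup_eq_right.mpr h, inf_eq_right.mpr (godImp_anti h)]
  · rw [sup_eq_left.mpr h, inf_eq_left.mpr (godImp_anti h)]

lemma godImp_inf_left (a b y : UI) : godImp (a ⊓ b) y = godImp a (godImp b y) := by
  rcases le_or_gt b y with h | h
  · rw [godImp_one_of_le (le_trans inf_le_right h), godImp_one_of_le h,
      godImp_one_of_le unitInterval.le_one']
  · have hby : godImp b y = y := by rw [godImp, if_neg (not_le.mpr h)]
    rw [hby]
    rcases le_or_gt a y with h2 | h2
    · rw [godImp_one_of_le (le_trans inf_le_left h2), godImp_one_of_le h2]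
    · have hab : ¬ a ⊓ b ≤ y := by rw [inf_le_iff]; push_neg; exact ⟨h2, h⟩
      have h1 : godImp (a ⊓ b) y = y := by rw [godImp, if_neg hab]
      have h2' : godImp a y = y := by rw [godImp, if_neg (not_le.mpr h2)]
      rw [h1, h2']

lemma godImp_iInf {ι : Sort*} (c : UI) (x : ι → UI) :
    godImp c (⨅ i, x i) = ⨅ i, godImp c (x i) := by
  apply le_antisymm
  · exact le_iInf fun i => godImp_mono (iInf_le _ i)
  · by_contra hc
    push_neg at hc
    have hm : (⨅ i, x i) < c := by
      by_contra h2
      push_neg at h2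
      rw [godImp_one_of_le h2] at hc
      exact absurd hc (not_lt.mpr unitInterval.le_one')
    rw [godImp, if_neg (not_le.mpr hm)] at hc
    have hmb : (⨅ i, x i) < min (⨅ i, godImp c (x i)) c := lt_min hc hm
    obtain ⟨i, hi⟩ := iInf_lt_iff.mp hmb
    have hxc : x i < c := lt_of_lt_of_le hi (min_le_right _ _)
    have heq : godImp c (x i) = x i := by rw [godImp, if_neg (not_le.mpr hxc)]
    exact absurd (lt_of_lt_of_le hi (min_le_left _ _)) (not_lt.mpr (heq ▸ iInf_le _ i))

variable {V : Type}

lemma Subdeg_god (L : RStr) (hi : L.imp = godImp) (A e : V → UI) :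
    Subdeg L A e = ⨅ v, godImp (A v) (e v) := by rw [Subdeg, hi]

lemma Subdeg_sing (L : RStr) (hi : L.imp = godImp) (v : V) (a : UI) (e : V → UI) :
    Subdeg L (sing v a) e = godImp a (e v) := by
  rw [Subdeg_god L hi]
  apply le_antisymm
  · exact (iInf_le _ v).trans (le_of_eq (by rw [sing, if_pos rfl]))
  · refine le_iInf fun w => ?_
    rcases eq_or_ne w v with h | h
    · subst h; rw [sing, if_pos rfl]
    · rw [sing, if_neg h, godImp_zero_left]; exact unitInterval.le_one'

lemma Subdeg_funion (L : RStr) (hi : L.imp = godImp) (A B e : V → UI) :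
    Subdeg L (funion A B) e = Subdeg L A e ⊓ Subdeg L B e := by
  simp only [Subdeg_god L hi, funion, godImp_sup]
  exact iInf_inf_eq

lemma Subdeg_csmul (L : RStr) (hm : L.mul = godMul) (hi : L.imp = godImp) (c : UI) (A e : V → UI) :
    Subdeg L (csmul L c A) e = godImp c (Subdeg L A e) := by
  simp only [Subdeg_god L hi, csmul, hm, godMul, godImp_inf_left, godImp_iInf]

/-- Soundness of provability w.r.t. constant evaluations with value `t < 1/2`,
    for the theory of the incompleteness example. -/
lemma godel_sound (L : RStr) (hm : L.mul = godMul) (hi : L.imp = godImp)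
    (p q : V) (A B : V → UI)
    (h : Proves L ({AB | ∃ a : UI, IsRatUI a ∧ (a : ℝ) < 1/2 ∧ AB = (sing p 0, sing p a)}
        ∪ {(sing p half, sing q 1)}) A B) :
    ∃ t₀ : UI, (t₀ : ℝ) < 1/2 ∧ ∀ t : UI, t₀ ≤ t → (t : ℝ) < 1/2 →
      Subdeg L A (fun _ => t) ≤ Subdeg L B (fun _ => t) := by
  induction h with
  | ax A B _ _ _ _ =>
      refine ⟨0, by norm_num, fun t _ _ => ?_⟩
      rw [Subdeg_funion L hi]; exact inf_le_right
  | hyp A B hAB =>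
      rcases hAB with ⟨a, _, ha, hAB⟩ | hAB
      · rw [Prod.mk.injEq] at hAB
        obtain ⟨hA, hB⟩ := hAB
        subst hA; subst hB
        refine ⟨a, ha, fun t hat _ => ?_⟩
        rw [Subdeg_sing L hi, Subdeg_sing L hi, godImp_zero_left,
          godImp_one_of_le hat]
      · rw [Set.mem_singleton_iff, Prod.mk.injEq] at hAB
        obtain ⟨hA, hB⟩ := hAB
        subst hA; subst hB
        refine ⟨0, by norm_num, fun t _ ht => ?_⟩
        rw [Subdeg_sing L hi, Subdeg_sing L hi]
        have hth : t < half := by rw [← Subtype.coe_lt_coe]; exact ht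
        have h1 : godImp half t = t := by rw [godImp, if_neg (not_le.mpr hth)]
        rw [h1]; exact le_godImp _ _
  | cut A B C D _ _ ih1 ih2 =>
      obtain ⟨t₁, ht₁, H1⟩ := ih1
      obtain ⟨t₂, ht₂, H2⟩ := ih2
      refine ⟨t₁ ⊔ t₂, ?_, fun t hst ht => ?_⟩
      · rcases le_total t₁ t₂ with h | h
        · rw [sup_eq_right.mpr h]; exact ht₂
        · rw [sup_eq_left.mpr h]; exact ht₁
      have hA := H1 t (le_trans le_sup_left hst) ht
      have hBC := H2 t (le_trans le_sup_right hst) ht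
      rw [Subdeg_funion L hi] at *
      exact le_trans (inf_le_inf_right _ hA) hBC
  | mul A B c _ _ ih =>
      obtain ⟨t₁, ht₁, H1⟩ := ih
      exact ⟨t₁, ht₁, fun t hst ht => by
        rw [Subdeg_csmul L hm hi, Subdeg_csmul L hm hi]
        exact godImp_mono (H1 t hst ht)⟩

/-- failure of Pavelka completeness over the standard Gödel
    algebra: for Σ = {{0/p} ⇒ {a/p} : a rational, a < 0.5} ∪ {{0.5/p} ⇒ {1/q}}
    we have ||{0/p}⇒{1/q}||_Σ = 1 but |{0/p}⇒{1/q}|_Σ ≤ 0.5 < 1. -/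
theorem godel_pavelka_incompleteness {V : Type} [Countable V] (L : RStr)
    (hm : L.mul = godMul) (hi : L.imp = godImp)
    (p q : V) (hpq : p ≠ q) :
    semDeg L ({AB | ∃ a : UI, IsRatUI a ∧ (a : ℝ) < 1/2 ∧ AB = (sing p 0, sing p a)}
        ∪ {(sing p half, sing q 1)}) (sing p 0) (sing q 1) = 1 ∧
    provDeg L ({AB | ∃ a : UI, IsRatUI a ∧ (a : ℝ) < 1/2 ∧ AB = (sing p 0, sing p a)}
        ∪ {(sing p half, sing q 1)}) (sing p 0) (sing q 1) ≤ half ∧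
    half < 1 := by
  constructor
  · -- semantic part
    set T : Set ((V → UI) × (V → UI)) :=
      {AB | ∃ a : UI, IsRatUI a ∧ (a : ℝ) < 1/2 ∧ AB = (sing p 0, sing p a)}
        ∪ {(sing p half, sing q 1)} with hT
    have key : ∀ e : V → UI, IsModel L T e → truthDeg L e (sing p 0) (sing q 1) = 1 := by
      intro e he
      have hep : half ≤ e p := by
        by_contra hep
        push_neg at hep
        have hep' : (e p : ℝ) < 1/2 := hep
        obtain ⟨ρ, hρ1, hρ2⟩ := exists_rat_btwn hep'
        have h0ρ : (0:ℝ) ≤ ρ := le_of_lt (lt_of_le_of_lt (e p).2.1 hρ1)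
        have h1ρ : (ρ:ℝ) ≤ 1 := le_of_lt (lt_of_lt_of_le hρ2 (by norm_num))
        set a : UI := ⟨ρ, Set.mem_Icc.mpr ⟨h0ρ, h1ρ⟩⟩ with ha
        have hmem : (sing p 0, sing p a) ∈ T := Or.inl ⟨a, ⟨ρ, rfl⟩, hρ2, rfl⟩
        have := he _ hmem
        rw [truthDeg, hi, Subdeg_sing L hi, Subdeg_sing L hi, godImp_zero_left] at this
        have h1 : (1 : UI) ≤ godImp a (e p) := godImp_le_of_one this
        have h2 : godImp a (e p) = e p := by
          rw [godImp, if_neg (not_le.mpr (show e p < a from hρ1))]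
        rw [h2] at h1
        have h3 : (1:ℝ) ≤ (e p : ℝ) := h1
        linarith
      have heq : e q = 1 := by
        have hmem : (sing p half, sing q 1) ∈ T := Or.inr rfl
        have := he _ hmem
        rw [truthDeg, hi, Subdeg_sing L hi, Subdeg_sing L hi,
          godImp_one_of_le hep] at this
        have h1 : (1:UI) ≤ godImp 1 (e q) := godImp_le_of_one this
        have h2 : (1:UI) ≤ e q := godImp_le_of_one (le_antisymm unitInterval.le_one' h1)
        exact le_antisymm unitInterval.le_one' h2
      rw [truthDeg, hi, Subdeg_sing L hi, Subdeg_sing L hi, godImp_zero_left, heq,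
        godImp_one_of_le le_rfl, godImp_one_of_le le_rfl]
    apply le_antisymm unitInterval.le_one'
    refine le_iInf fun e => le_iInf fun he => le_of_eq (key e he).symm
  constructor
  · -- provability part
    refine sSup_le fun c hc => ?_
    obtain ⟨hcr, hprf⟩ := hc
    have hcs : csmul L c (sing q 1) = sing q c := by
      funext v
      rw [csmul, hm, godMul, sing, sing]
      rcases eq_or_ne v q with h | h
      · rw [if_pos h, if_pos h, inf_eq_left.mpr unitInterval.le_one']
      · rw [if_neg h, if_neg h, inf_eq_right.mpr unitInterval.nonneg']
    rw [hcs] at hprf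
    obtain ⟨t₀, ht₀, H⟩ := godel_sound L hm hi p q _ _ hprf
    have h1 := H t₀ le_rfl ht₀
    rw [Subdeg_sing L hi, Subdeg_sing L hi, godImp_zero_left] at h1
    have h2 : c ≤ t₀ := godImp_le_of_one (le_antisymm unitInterval.le_one' h1)
    have : (c : ℝ) ≤ 1/2 := le_trans h2 (le_of_lt ht₀)
    exact this
  · exact Subtype.coe_lt_coe.mp (by norm_num [half])
end
end

section
/- A finitary but not rational Gödel closure operator: let ⊗ = min on [0,1] with residuum a → b = 1 if a ≤ b and b otherwise, let U = {u} be a one-element set, and let c ∈ [0,1] be irrational. Define C on [0,1]^U by C({a/u})(u) = a if a < c and 1 if a ≥ c. Then C is an L-closure operator (extensive, monotone with respect to subsethood degrees, idempotent) and C is finitary, but C is not rational: ⨆{C({a/u})(u) : a rational, a ≤ c} = c < 1 = C({c/u})(u). -/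
/- Common framework for Rational Fuzzy Attribute Logic (RFAL):
   truth degrees in the real unit interval, fuzzy sets, subsethood,
   the deductive system (axioms, Cut, Mul), provability and semantic
   entailment degrees, and the least-model iteration. -/

open scoped Classical
noncomputable section

variable {V : Type}

/-- The closure operator on the one-element universe Unit determined by an
    irrational threshold c: C({a/u})(u) = a if a < c, and 1 if a ≥ c. -/
def thresholdOp (c : UI) : (Unit → UI) → (Unit → UI) :=
  fun A _ => if A () < c then A () else 1

lemma UI_ne_of_irr {c a : UI} (hc : Irrational (c:ℝ)) (ha : IsRatUI a) : a ≠ c := by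
  rintro rfl
  obtain ⟨q, hq⟩ := ha
  exact hc ⟨q, hq.symm⟩

lemma thr_ext (c : UI) (A : Unit → UI) (u : Unit) : A u ≤ thresholdOp c A u := by
  cases u
  unfold thresholdOp
  split_ifs with h
  · exact le_refl _
  · exact unitInterval.le_one'

lemma thr_mono (c : UI) {A B : Unit → UI} (h : ∀ u, A u ≤ B u) (u : Unit) :
    thresholdOp c A u ≤ thresholdOp c B u := by
  unfold thresholdOp
  split_ifs with h1 h2 h2
  · exact h ()
  · exact unitInterval.le_one'
  · exact absurd (lt_of_le_of_lt (le_trans (not_lt.mp h1) (h ())) h2) (lt_irrefl _)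
  · exact le_refl _

/-- over the standard Gödel algebra, the threshold operator at
    an irrational c is a finitary L-closure operator which is not rational;
    in fact ⨆{C({a/u})(u) : a rational, a ≤ c} = c < 1 = C({c/u})(u). -/
theorem godel_finitary_not_rational (L : RStr)
    (hm : L.mul = godMul) (hi : L.imp = godImp)
    (c : UI) (hc : Irrational (c : ℝ)) :
    IsClosureOp L (thresholdOp c) ∧
    FinitaryOp (thresholdOp c) ∧
    ¬ RationalOp (thresholdOp c) ∧
    (⨆ a ∈ {a : UI | IsRatUI a ∧ a ≤ c}, thresholdOp c (fun _ => a) ()) = c ∧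
    c < 1 ∧
    thresholdOp c (fun _ => c) () = 1 := by
  have hc1 : c < 1 := lt_of_le_of_ne unitInterval.le_one'
    (fun h => hc ⟨1, by simp [h]⟩)
  have hCc : thresholdOp c (fun _ => c) () = 1 := by
    unfold thresholdOp; simp
  have hlt : ∀ a : UI, IsRatUI a → a ≤ c → a < c := fun a ha hle =>
    lt_of_le_of_ne hle (UI_ne_of_irr hc ha)
  refine ⟨⟨thr_ext c, ?_, ?_⟩, ?_, ?_, ?_, hc1, hCc⟩
  · -- monotone w.r.t. subsethood
    intro A B
    simp only [Subdeg, hi, iInf_unique]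
    rcases le_or_gt (A ()) (B ()) with h | h
    · have hCB : thresholdOp c A () ≤ thresholdOp c B () := thr_mono c (fun _ => h) ()
      simp [godImp, h, hCB]
    · have h1 : godImp (A ()) (B ()) = B () := by simp [godImp, not_le.mpr h]
      rw [h1]
      unfold godImp
      split_ifs with h2
      · exact unitInterval.le_one'
      · exact thr_ext c B ()
  · -- idempotent
    intro A
    funext u
    by_cases h : A () < c
    · simp [thresholdOp, h]
    · simp [thresholdOp, h]
  · -- finitary
    intro A
    funext u
    refine le_antisymm ?_ (iSup₂_le fun B hB => thr_mono c hB.1 u)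
    exact le_iSup₂ (f := fun B _ => thresholdOp c B u) A ⟨fun v => le_refl _, Set.toFinite _⟩
  · -- not rational
    intro h
    have h1 := congrFun (h (fun _ => c)) ()
    rw [hCc] at h1
    have h2 : (⨆ B ∈ {B : Unit → UI | (∀ v, B v ≤ (fun _ => c) v) ∧ FinSet B ∧ RatSet B},
        thresholdOp c B ()) ≤ c := by
      refine iSup₂_le fun B hB => ?_
      have hBc : B () < c := hlt _ (hB.2.2 ()) (hB.1 ())
      simp only [thresholdOp, if_pos hBc]
      exact hBc.le
    rw [← h1] at h2
    exact absurd (lt_of_le_of_lt h2 hc1) (lt_irrefl _)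
  · -- the supremum equals c
    refine le_antisymm (iSup₂_le fun a ha => ?_) ?_
    · have hac : a < c := hlt a ha.1 ha.2
      simp only [thresholdOp, if_pos hac]
      exact hac.le
    · refine le_of_forall_lt fun x hx => ?_
      obtain ⟨q, hq1, hq2⟩ := exists_rat_btwn (Subtype.coe_lt_coe.mpr hx)
      have hq0 : (0:ℝ) ≤ q := le_trans x.2.1 hq1.le
      have hq1' : (q:ℝ) ≤ 1 := le_trans hq2.le c.2.2
      set a : UI := ⟨q, ⟨hq0, hq1'⟩⟩ with ha
      have hac : a < c := Subtype.mk_lt_mk.mpr hq2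
      have hmem : a ∈ {a : UI | IsRatUI a ∧ a ≤ c} := ⟨⟨q, rfl⟩, hac.le⟩
      have : a ≤ ⨆ a ∈ {a : UI | IsRatUI a ∧ a ≤ c}, thresholdOp c (fun _ => a) () := by
        refine le_iSup₂_of_le a hmem ?_
        simp [thresholdOp, if_pos hac]
      exact lt_of_lt_of_le (Subtype.mk_lt_mk.mpr hq1) this
end
end
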